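/- If ω satisfies the Diophantine condition with exponent τ, then for η(θ) = Σ_{k≠0} b_k e^{2πikθ} with zero average and coefficients satisfying |b_k| ≤ C e^{−ρ|k|} for some ρ > 0, the formal solution φ with a_k = b_k/(1 − e^{2πiωk}) has coefficients bounded by |a_k| ≤ (C/(4ν)) |k|^{τ} e^{−ρ|k|}; in particular the Fourier series of φ converges absolutely and uniformly. -/

import Mathlib

/-!
The small divisors are controlled by the distance from `ωk` to the nearest integer: by Jordan's
inequality `‖1 - e^{2πiωk}‖ ≥ 4 ‖ωk‖_{ℝ/ℤ} ≥ 4ν|k|^{-τ}`, so dividing by them costs only the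
polynomial factor `|k|^τ / (4ν)`, which the exponential decay `e^{-ρ|k|}` absorbs. The coefficients
are then absolutely summable, and since `|e^{2πikθ}| = 1` the Weierstrass M-test gives uniform
convergence.
-/

open Complex Real Filter Asymptotics

def IsDiophantine (ω ν τ : ℝ) : Prop :=
  ∀ p q : ℤ, q ≠ 0 → ν * |(q : ℝ)| ^ (-τ) ≤ |ω * q - p|

lemma four_mul_abs_sub_round_le_norm_one_sub_exp (x : ℝ) :
    4 * |x - round x| ≤ ‖1 - exp (2 * π * I * x)‖ := by
  set t := x - round x
  have hexp : exp (2 * π * I * x) = exp (I * ↑(2 * π * t)) := by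
    rw [← exp_periodic.int_mul (round x) (I * ↑(2 * π * t))]
    push_cast [t]
    ring_nf
  have ht : |π * t| ≤ π / 2 := by
    rw [abs_mul, abs_of_pos pi_pos]
    nlinarith [abs_sub_round x, pi_pos]
  calc 4 * |t| = 2 * (2 / π * |π * t|) := by
        rw [abs_mul, abs_of_pos pi_pos]; field_simp; ring
    _ ≤ 2 * |Real.sin (π * t)| := by gcongr; exact mul_abs_le_abs_sin ht
    _ = ‖1 - exp (2 * π * I * x)‖ := by
        rw [hexp, norm_sub_rev, norm_exp_I_mul_ofReal_sub_one, norm_mul, Real.norm_eq_abs,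
          Real.norm_eq_abs, abs_two]
        ring_nf

lemma IsDiophantine.le_norm_one_sub_exp {ω ν τ : ℝ} (hω : IsDiophantine ω ν τ) {k : ℤ}
    (hk : k ≠ 0) : 4 * (ν * |(k : ℝ)| ^ (-τ)) ≤ ‖1 - exp (2 * π * I * ω * k)‖ := by
  calc 4 * (ν * |(k : ℝ)| ^ (-τ)) ≤ 4 * |ω * k - round (ω * k)| := by
        gcongr; exact hω _ k hk
    _ ≤ ‖1 - exp (2 * π * I * ω * k)‖ := by
        simpa [mul_assoc] using four_mul_abs_sub_round_le_norm_one_sub_exp (ω * k)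

lemma IsDiophantine.norm_div_one_sub_exp_le {ω ν τ : ℝ} (hω : IsDiophantine ω ν τ) (hν : 0 < ν)
    {k : ℤ} (hk : k ≠ 0) {z : ℂ} {B : ℝ} (hz : ‖z‖ ≤ B) :
    ‖z / (1 - exp (2 * π * I * ω * k))‖ ≤ B / (4 * ν) * |(k : ℝ)| ^ τ := by
  have hk' : 0 < |(k : ℝ)| := by positivity
  rw [norm_div]
  calc ‖z‖ / ‖1 - exp (2 * π * I * ω * k)‖ ≤ B / (4 * (ν * |(k : ℝ)| ^ (-τ))) :=
        div_le_div₀ ((norm_nonneg z).trans hz) hz (by positivity) (hω.le_norm_one_sub_exp hk)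
    _ = B / (4 * ν) * |(k : ℝ)| ^ τ := by
        rw [Real.rpow_neg hk'.le]
        field_simp

lemma summable_nat_rpow_mul_exp_neg_mul (τ : ℝ) {ρ : ℝ} (hρ : 0 < ρ) :
    Summable fun n : ℕ => (n : ℝ) ^ τ * Real.exp (-ρ * n) := by
  have hO : (fun x : ℝ => x ^ τ * Real.exp (-ρ * x)) =O[atTop]
      fun x => Real.exp (x * -(ρ / 2)) := by
    refine ((isLittleO_rpow_exp_pos_mul_atTop τ (half_pos hρ)).isBigO.mul
      (isBigO_refl (fun x => Real.exp (-ρ * x)) atTop)).congr_right fun x => ?_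
    rw [← Real.exp_add]; ring_nf
  exact summable_of_isBigO_nat (Real.summable_exp_nat_mul_iff.mpr (by linarith : -(ρ / 2) < 0))
    (hO.comp_tendsto tendsto_natCast_atTop_atTop)

lemma summable_abs_int_rpow_mul_exp_neg_mul (τ : ℝ) {ρ : ℝ} (hρ : 0 < ρ) :
    Summable fun k : ℤ => |(k : ℝ)| ^ τ * Real.exp (-ρ * |(k : ℝ)|) := by
  apply Summable.of_nat_of_neg
  on_goal 2 => simp_rw [Int.cast_neg, abs_neg]
  all_goals
    simp_rw [Int.cast_natCast, fun n : ℕ => abs_of_nonneg (n.cast_nonneg : 0 ≤ (n : ℝ))]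
    exact summable_nat_rpow_mul_exp_neg_mul τ hρ

lemma tendstoUniformly_fourier_partial_sums {a : ℤ → ℂ} (ha : Summable fun k => ‖a k‖) :
    TendstoUniformly (fun (s : Finset ℤ) (θ : ℝ) => ∑ k ∈ s, a k * exp (2 * π * I * k * θ))
      (fun θ : ℝ => ∑' k : ℤ, a k * exp (2 * π * I * k * θ)) atTop := by
  refine tendstoUniformly_tsum ha fun k θ => ?_
  rw [norm_mul, norm_exp]
  simp

theorem diophantine_cohomological_solution_bounds_general
    (ω ν τ C ρ : ℝ) (hν : 0 < ν) (hρ : 0 < ρ)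
    (hdio : ∀ (p : ℤ) (q : ℤ), q ≠ 0 → ν * (|q| : ℝ) ^ (-τ) ≤ |ω * q - p|)
    (b a : ℤ → ℂ)
    (hbdecay : ∀ k : ℤ, ‖b k‖ ≤ C * Real.exp (-ρ * |(k : ℝ)|))
    (ha0 : a 0 = 0)
    (ha : ∀ k : ℤ, k ≠ 0 →
      a k = b k / (1 - Complex.exp (2 * (Real.pi : ℂ) * Complex.I * (ω : ℂ) * (k : ℂ)))) :
    (∀ k : ℤ, k ≠ 0 →
      ‖a k‖ ≤ C / (4 * ν) * (|k| : ℝ) ^ τ * Real.exp (-ρ * |(k : ℝ)|)) ∧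
    Summable (fun k : ℤ => ‖a k‖) ∧
    TendstoUniformly
      (fun (s : Finset ℤ) (θ : ℝ) =>
        ∑ k ∈ s, a k * Complex.exp (2 * (Real.pi : ℂ) * Complex.I * (k : ℂ) * (θ : ℂ)))
      (fun θ : ℝ =>
        ∑' k : ℤ, a k * Complex.exp (2 * (Real.pi : ℂ) * Complex.I * (k : ℂ) * (θ : ℂ)))
      Filter.atTop := by
  have hcoeff : ∀ k : ℤ, k ≠ 0 →
      ‖a k‖ ≤ C / (4 * ν) * |(k : ℝ)| ^ τ * Real.exp (-ρ * |(k : ℝ)|) := by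
    intro k hk
    rw [ha k hk]
    calc _ ≤ C * Real.exp (-ρ * |(k : ℝ)|) / (4 * ν) * |(k : ℝ)| ^ τ :=
          IsDiophantine.norm_div_one_sub_exp_le hdio hν hk (hbdecay k)
      _ = _ := by ring
  have hC : 0 ≤ C := by simpa using (norm_nonneg _).trans (hbdecay 0)
  have hsum : Summable fun k => ‖a k‖ := by
    refine ((summable_abs_int_rpow_mul_exp_neg_mul τ hρ).mul_left (C / (4 * ν))).of_nonneg_of_le
      (fun _ => norm_nonneg _) fun k => ?_
    rcases eq_or_ne k 0 with rfl | hk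
    · rw [ha0, norm_zero]; positivity
    · rw [← mul_assoc]; exact hcoeff k hk
  exact ⟨hcoeff, hsum, tendstoUniformly_fourier_partial_sums hsum⟩

/-- For Diophantine `ω` and zero-average `η` with exponentially decaying Fourier
coefficients `|b_k| ≤ C e^{−ρ|k|}`, the formal solution coefficients
`a_k = b_k/(1 − e^{2πiωk})` satisfy `|a_k| ≤ (C/(4ν)) |k|^τ e^{−ρ|k|}`; in
particular the Fourier series of `φ` converges absolutely and uniformly. -/
theorem diophantine_cohomological_solution_bounds
    (ω ν τ C ρ : ℝ) (hν : 0 < ν) (hτ : 1 < τ) (hC : 0 < C) (hρ : 0 < ρ)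
    (hdio : ∀ (p : ℤ) (q : ℤ), q ≠ 0 → ν * (|q| : ℝ) ^ (-τ) ≤ |ω * q - p|)
    (b a : ℤ → ℂ) (hb0 : b 0 = 0)
    (hbdecay : ∀ k : ℤ, ‖b k‖ ≤ C * Real.exp (-ρ * |(k : ℝ)|))
    (ha0 : a 0 = 0)
    (ha : ∀ k : ℤ, k ≠ 0 →
      a k = b k / (1 - Complex.exp (2 * (Real.pi : ℂ) * Complex.I * (ω : ℂ) * (k : ℂ)))) :
    (∀ k : ℤ, k ≠ 0 →
      ‖a k‖ ≤ C / (4 * ν) * (|k| : ℝ) ^ τ * Real.exp (-ρ * |(k : ℝ)|)) ∧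
    Summable (fun k : ℤ => ‖a k‖) ∧
    TendstoUniformly
      (fun (s : Finset ℤ) (θ : ℝ) =>
        ∑ k ∈ s, a k * Complex.exp (2 * (Real.pi : ℂ) * Complex.I * (k : ℂ) * (θ : ℂ)))
      (fun θ : ℝ =>
        ∑' k : ℤ, a k * Complex.exp (2 * (Real.pi : ℂ) * Complex.I * (k : ℂ) * (θ : ℂ)))
      Filter.atTop :=
  diophantine_cohomological_solution_bounds_general ω ν τ C ρ hν hρ hdio b a hbdecay ha0 ha
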